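/- In the gas container system with state z = (q, p, S₁, S₂) ∈ ℝ⁴, q ∈ (0,2), define T_i = (2/(3Nk_B)) e^{(2/(3Nk_B)) S_i} V_i^{-2/3} with V₁ = q, V₂ = 2−q, and let M(z) be the 4×4 matrix that is zero except for the lower-right 2×2 block α·[[T₁⁻², −(T₁T₂)⁻¹],[−(T₁T₂)⁻¹, T₂⁻²]] with α > 0. Define F_M(z) = e^{C S₁} q^{−2/3} + e^{C S₂} (2−q)^{−2/3} with C = 2/(3Nk_B). Then the kernel of M(z) equals span{e₁, e₂, ∇F_M(z)}. -/

import Mathlib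

open Matrix Real

set_option maxHeartbeats 1000000 in
private lemma gradF_aux (C : ℝ) (z : EuclideanSpace ℝ (Fin 4)) (hq0 : 0 < z 0) (hq2 : z 0 < 2)
    (F : EuclideanSpace ℝ (Fin 4) → ℝ)
    (hF : F = fun w =>
      Real.exp (C * w 2) * (w 0) ^ (-(2 : ℝ) / 3)
        + Real.exp (C * w 3) * (2 - w 0) ^ (-(2 : ℝ) / 3)) :
    HasGradientAt F ((WithLp.equiv 2 (Fin 4 → ℝ)).symm
      ![Real.exp (C * z 2) * ((-(2:ℝ)/3) * (z 0) ^ (-(2:ℝ)/3 - 1))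
          - Real.exp (C * z 3) * ((-(2:ℝ)/3) * (2 - z 0) ^ (-(2:ℝ)/3 - 1)), 0,
        C * Real.exp (C * z 2) * (z 0) ^ (-(2:ℝ)/3),
        C * Real.exp (C * z 3) * (2 - z 0) ^ (-(2:ℝ)/3)]) z := by
  have h0 : HasFDerivAt (𝕜 := ℝ) (fun w : EuclideanSpace ℝ (Fin 4) => w 0)
      ((EuclideanSpace.proj (0 : Fin 4) : EuclideanSpace ℝ (Fin 4) →L[ℝ] ℝ)) z := by
    have h := (EuclideanSpace.proj (0 : Fin 4) : EuclideanSpace ℝ (Fin 4) →L[ℝ] ℝ).hasFDerivAt (x := z); exact h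
  have h2 : HasFDerivAt (𝕜 := ℝ) (fun w : EuclideanSpace ℝ (Fin 4) => w 2)
      ((EuclideanSpace.proj (2 : Fin 4) : EuclideanSpace ℝ (Fin 4) →L[ℝ] ℝ)) z := by
    have h := (EuclideanSpace.proj (2 : Fin 4) : EuclideanSpace ℝ (Fin 4) →L[ℝ] ℝ).hasFDerivAt (x := z); exact h
  have h3 : HasFDerivAt (𝕜 := ℝ) (fun w : EuclideanSpace ℝ (Fin 4) => w 3)
      ((EuclideanSpace.proj (3 : Fin 4) : EuclideanSpace ℝ (Fin 4) →L[ℝ] ℝ)) z := by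
    have h := (EuclideanSpace.proj (3 : Fin 4) : EuclideanSpace ℝ (Fin 4) →L[ℝ] ℝ).hasFDerivAt (x := z); exact h
  have hexp2 : HasFDerivAt (𝕜 := ℝ) (fun w : EuclideanSpace ℝ (Fin 4) => Real.exp (C * w 2))
      (Real.exp (C * z 2) • (C • (EuclideanSpace.proj (2 : Fin 4) : EuclideanSpace ℝ (Fin 4) →L[ℝ] ℝ))) z :=
    by have h := (Real.hasDerivAt_exp (C * z 2)).comp_hasFDerivAt z (h2.const_mul C); exact h
  have hexp3 : HasFDerivAt (𝕜 := ℝ) (fun w : EuclideanSpace ℝ (Fin 4) => Real.exp (C * w 3))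
      (Real.exp (C * z 3) • (C • (EuclideanSpace.proj (3 : Fin 4) : EuclideanSpace ℝ (Fin 4) →L[ℝ] ℝ))) z :=
    by have h := (Real.hasDerivAt_exp (C * z 3)).comp_hasFDerivAt z (h3.const_mul C); exact h
  have hr1 : HasFDerivAt (𝕜 := ℝ) (fun w : EuclideanSpace ℝ (Fin 4) => (w 0) ^ (-(2:ℝ)/3))
      (((-(2:ℝ)/3) * (z 0) ^ (-(2:ℝ)/3 - 1)) • (EuclideanSpace.proj (0 : Fin 4) : EuclideanSpace ℝ (Fin 4) →L[ℝ] ℝ)) z :=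
    by have h := (Real.hasDerivAt_rpow_const (p := -(2:ℝ)/3) (Or.inl (ne_of_gt hq0))).comp_hasFDerivAt z h0; exact h
  have hsub : HasFDerivAt (𝕜 := ℝ) (fun w : EuclideanSpace ℝ (Fin 4) => 2 - w 0)
      (-(EuclideanSpace.proj (0 : Fin 4) : EuclideanSpace ℝ (Fin 4) →L[ℝ] ℝ)) z := by
    simpa using h0.const_sub 2
  have hr2 : HasFDerivAt (𝕜 := ℝ) (fun w : EuclideanSpace ℝ (Fin 4) => (2 - w 0) ^ (-(2:ℝ)/3))
      (((-(2:ℝ)/3) * (2 - z 0) ^ (-(2:ℝ)/3 - 1)) •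
        (-(EuclideanSpace.proj (0 : Fin 4) : EuclideanSpace ℝ (Fin 4) →L[ℝ] ℝ))) z :=
    by have h := (Real.hasDerivAt_rpow_const (p := -(2:ℝ)/3) (Or.inl (by intro h; linarith [h] : (2 - z 0) ≠ 0))).comp_hasFDerivAt z hsub; exact h
  have hF' := (hexp2.mul hr1).add (hexp3.mul hr2)
  rw [hF]
  rw [hasGradientAt_iff_hasFDerivAt]
  convert hF' using 2
  · rfl
  · rfl
  · rfl
  ext v
  simp [InnerProductSpace.toDual_apply_apply, PiLp.inner_apply, Fin.sum_univ_four,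
    WithLp.equiv_symm_apply, ContinuousLinearMap.smul_apply, smul_eq_mul]
  ring

/-- Gas container example: the kernel of the friction matrix `M(z)` equals
`span{e₁, e₂, ∇F_M(z)}`. -/
theorem gas_container_kernel (N kB α : ℝ) (hN : 0 < N) (hkB : 0 < kB) (hα : 0 < α)
    (C : ℝ) (hC : C = 2 / (3 * N * kB))
    (z : EuclideanSpace ℝ (Fin 4)) (hq0 : 0 < z 0) (hq2 : z 0 < 2)
    (T₁ T₂ : ℝ)
    (hT1 : T₁ = C * Real.exp (C * z 2) * (z 0) ^ (-(2 : ℝ) / 3))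
    (hT2 : T₂ = C * Real.exp (C * z 3) * (2 - z 0) ^ (-(2 : ℝ) / 3))
    (M : Matrix (Fin 4) (Fin 4) ℝ)
    (hM : M = !![0, 0, 0, 0;
                 0, 0, 0, 0;
                 0, 0, α * (T₁ ^ 2)⁻¹, -(α * (T₁ * T₂)⁻¹);
                 0, 0, -(α * (T₁ * T₂)⁻¹), α * (T₂ ^ 2)⁻¹])
    (F : EuclideanSpace ℝ (Fin 4) → ℝ)
    (hF : F = fun w =>
      Real.exp (C * w 2) * (w 0) ^ (-(2 : ℝ) / 3)
        + Real.exp (C * w 3) * (2 - w 0) ^ (-(2 : ℝ) / 3)) :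
    LinearMap.ker M.mulVecLin =
      Submodule.span ℝ
        {(Pi.single 0 1 : Fin 4 → ℝ), (Pi.single 1 1 : Fin 4 → ℝ),
          ((gradient F z : EuclideanSpace ℝ (Fin 4)) : Fin 4 → ℝ)} := by
  have hCpos : 0 < C := by rw [hC]; positivity
  have hT1pos : 0 < T₁ := by rw [hT1]; positivity
  have hT2pos : 0 < T₂ := by
    rw [hT2]
    have : (0:ℝ) < 2 - z 0 := by linarith
    positivity
  set g0 : ℝ := Real.exp (C * z 2) * ((-(2:ℝ)/3) * (z 0) ^ (-(2:ℝ)/3 - 1))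
      - Real.exp (C * z 3) * ((-(2:ℝ)/3) * (2 - z 0) ^ (-(2:ℝ)/3 - 1)) with hg0
  have hgrad : gradient F z = (WithLp.equiv 2 (Fin 4 → ℝ)).symm ![g0, 0, T₁, T₂] := by
    rw [hT1, hT2]
    exact (gradF_aux C z hq0 hq2 F hF).gradient
  have hu : ((gradient F z : EuclideanSpace ℝ (Fin 4)) : Fin 4 → ℝ) = ![g0, 0, T₁, T₂] := by
    rw [hgrad]; rfl
  -- kernel characterisation
  have hT1' : T₁ ≠ 0 := ne_of_gt hT1pos
  have hT2' : T₂ ≠ 0 := ne_of_gt hT2pos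
  have hα' : α ≠ 0 := ne_of_gt hα
  have hker : ∀ x : Fin 4 → ℝ, M.mulVecLin x = 0 ↔ T₂ * x 2 = T₁ * x 3 := by
    intro x
    rw [Matrix.mulVecLin_apply, hM]
    constructor
    · intro h
      have h2 := congrFun h 2
      simp [Matrix.mulVec, dotProduct, Fin.sum_univ_four] at h2
      field_simp at h2
      have key : α * T₁ * (T₂ * x 2) = α * T₁ * (T₁ * x 3) := by linear_combination T₁ * h2
      exact mul_left_cancel₀ (mul_ne_zero hα' hT1') key
    · intro h
      funext i
      fin_cases i
      · simp [Matrix.mulVec, dotProduct, Fin.sum_univ_four]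
      · simp [Matrix.mulVec, dotProduct, Fin.sum_univ_four]
      · simp [Matrix.mulVec, dotProduct, Fin.sum_univ_four]
        field_simp
        linear_combination α * h
      · simp [Matrix.mulVec, dotProduct, Fin.sum_univ_four]
        field_simp
        linear_combination (-α) * h
  rw [hu]
  apply le_antisymm
  · intro x hx
    rw [LinearMap.mem_ker, hker] at hx
    have hmem0 : (Pi.single 0 1 : Fin 4 → ℝ) ∈ Submodule.span ℝ
        {(Pi.single 0 1 : Fin 4 → ℝ), (Pi.single 1 1 : Fin 4 → ℝ), ![g0, 0, T₁, T₂]} :=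
      Submodule.subset_span (by simp)
    have hmem1 : (Pi.single 1 1 : Fin 4 → ℝ) ∈ Submodule.span ℝ
        {(Pi.single 0 1 : Fin 4 → ℝ), (Pi.single 1 1 : Fin 4 → ℝ), ![g0, 0, T₁, T₂]} :=
      Submodule.subset_span (by simp)
    have hmemu : ![g0, 0, T₁, T₂] ∈ Submodule.span ℝ
        {(Pi.single 0 1 : Fin 4 → ℝ), (Pi.single 1 1 : Fin 4 → ℝ), ![g0, 0, T₁, T₂]} :=
      Submodule.subset_span (by simp)
    have hxeq : x = (x 0 - (x 2 / T₁) * g0) • (Pi.single 0 1 : Fin 4 → ℝ)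
        + x 1 • (Pi.single 1 1 : Fin 4 → ℝ)
        + (x 2 / T₁) • (![g0, 0, T₁, T₂] : Fin 4 → ℝ) := by
      funext i
      fin_cases i
      · simp [Pi.single_apply]
      · simp [Pi.single_apply]
      · simp [Pi.single_apply]
        field_simp
      · simp [Pi.single_apply]
        field_simp
        linarith [hx]
    rw [hxeq]
    exact Submodule.add_mem _ (Submodule.add_mem _ (Submodule.smul_mem _ _ hmem0)
      (Submodule.smul_mem _ _ hmem1)) (Submodule.smul_mem _ _ hmemu)
  · rw [Submodule.span_le]
    rintro v (rfl | rfl | rfl)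
    · exact (hker _).mpr (by simp)
    · exact (hker _).mpr (by simp)
    · refine (hker _).mpr ?_
      show T₂ * (![g0, 0, T₁, T₂] 2) = T₁ * (![g0, 0, T₁, T₂] 3)
      simp [mul_comm]
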